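/- arXiv:2011.03126 — 5 statements merged into one kernel-verified Lean document; each statement's English description precedes it below -/
import Mathlib

section
/- Fix k ∈ ℕ and functions f, g : ℝ → ℂ. For all distinct real numbers λ_1, …, λ_{k+1}: (fg)^{[k]}(λ_1,…,λ_{k+1}) = Σ_{j=0}^k f^{[j]}(λ_1,…,λ_{j+1}) · g^{[k−j]}(λ_{j+1},…,λ_{k+1}). If in addition f, g ∈ C^k(ℝ), then this formula holds for all (λ_1,…,λ_{k+1}) ∈ ℝ^{k+1} (with the divided differences interpreted via their continuous extensions). -/
/-!
Index the nodes by a sequence `ν : ℕ → ℝ`. The recursion for `f^{[n+1]}(ν_0, …, ν_{n+1})` is then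
the difference quotient of `f^{[n]}` at `ν` and at `ν' = update ν n ν_{n+1}`, and the windows
`ν'_j, ν'_{j+1}, …` are again updates of the windows of `ν`. Subtracting the Leibniz sums for `ν`
and `ν'` (induction on `k`), the terms `j < k` become `f^{[j]} g^{[k+1-j]}`, while the term `j = k`
splits as `f^{[k]}(ν) (g(ν_k) - g(ν_{k+1})) + (f^{[k]}(ν) - f^{[k]}(ν')) g(ν_{k+1})`, which yields
the two new terms.

For arbitrary nodes, both sides are continuous and agree on injective tuples, which are dense in
`ℝ^{k+1}`: their complement is a finite union of hyperplanes `λ_i = λ_j`.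
-/

open MeasureTheory Filter
open scoped ENNReal NNReal

/-- Recursive divided difference `f^{[k]}`. -/
noncomputable def divDiff (f : ℝ → ℂ) : (k : ℕ) → (Fin (k + 1) → ℝ) → ℂ
  | 0, lam => f (lam 0)
  | k + 1, lam =>
      (divDiff f k (fun i => lam i.castSucc) -
          divDiff f k
            (Fin.snoc (fun i : Fin k => lam i.castSucc.castSucc) (lam (Fin.last (k + 1))))) /
        (((lam ((Fin.last k).castSucc) : ℝ) : ℂ) - ((lam (Fin.last (k + 1)) : ℝ) : ℂ))

open Finset Function

noncomputable def divDiffSeq (f : ℝ → ℂ) (n : ℕ) (ν : ℕ → ℝ) : ℂ :=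
  divDiff f n fun i => ν i

theorem divDiffSeq_zero (f : ℝ → ℂ) (ν : ℕ → ℝ) : divDiffSeq f 0 ν = f (ν 0) := rfl

theorem divDiffSeq_succ (f : ℝ → ℂ) (n : ℕ) (ν : ℕ → ℝ) :
    divDiffSeq f (n + 1) ν =
      (divDiffSeq f n ν - divDiffSeq f n (update ν n (ν (n + 1)))) /
        ((ν n : ℂ) - ν (n + 1)) := by
  have hsnoc : (Fin.snoc (fun i : Fin n => ν i) (ν (n + 1)) : Fin (n + 1) → ℝ) =
      fun i : Fin (n + 1) => update ν n (ν (n + 1)) i := by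
    funext i
    induction i using Fin.lastCases with
    | last => simp
    | cast i => simp [i.isLt.ne]
  rw [divDiffSeq, divDiff]
  simp only [Fin.val_castSucc, Fin.val_last]
  rw [hsnoc]
  rfl

theorem divDiffSeq_one (f : ℝ → ℂ) (ν : ℕ → ℝ) :
    divDiffSeq f 1 ν = (f (ν 0) - f (ν 1)) / ((ν 0 : ℂ) - ν 1) := by
  simp [divDiffSeq_succ, divDiffSeq_zero]

theorem divDiffSeq_congr (f : ℝ → ℂ) {n : ℕ} {ν ν' : ℕ → ℝ} (h : ∀ i ≤ n, ν i = ν' i) :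
    divDiffSeq f n ν = divDiffSeq f n ν' :=
  congrArg (divDiff f n) (funext fun i => h i (Nat.lt_succ_iff.1 i.isLt))

theorem Set.InjOn.update_succ {α : Type*} {ν : ℕ → α} {k : ℕ}
    (h : Set.InjOn ν (Set.Iic (k + 1))) :
    Set.InjOn (update ν k (ν (k + 1))) (Set.Iic k) := by
  intro a ha b hb hab
  simp only [Set.mem_Iic] at ha hb
  simp only [update_apply] at hab
  have mem : ∀ {i}, i ≤ k + 1 → i ∈ Set.Iic (k + 1) := Set.mem_Iic.2
  split_ifs at hab with ha' hb'
  · exact ha'.trans hb'.symm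
  · have := h (mem le_rfl) (mem (by omega)) hab; omega
  · have := h (mem (by omega)) (mem le_rfl) hab; omega
  · exact h (mem (by omega)) (mem (by omega)) hab

theorem update_comp_add_left {α : Type*} (ν : ℕ → α) {j k : ℕ} (hjk : j ≤ k) (a : α) :
    (fun i => update ν k a (j + i)) = update (fun i => ν (j + i)) (k - j) a := by
  funext i
  simp only [update_apply]
  congr 1
  exact propext (by omega)

theorem divDiffSeq_mul (f g : ℝ → ℂ) (k : ℕ) (ν : ℕ → ℝ) (hν : Set.InjOn ν (Set.Iic k)) :
    divDiffSeq (fun x => f x * g x) k ν =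
      ∑ j ∈ range (k + 1), divDiffSeq f j ν * divDiffSeq g (k - j) fun i => ν (j + i) := by
  induction k generalizing ν with
  | zero => simp [divDiffSeq_zero]
  | succ k ih =>
    set ν' := update ν k (ν (k + 1))
    have hd : (ν k : ℂ) - ν (k + 1) ≠ 0 := by
      rw [sub_ne_zero, Ne, Complex.ofReal_inj]
      intro h
      have := hν (by simp) (by simp) h
      omega
    have hf : ∀ j < k, divDiffSeq f j ν' = divDiffSeq f j ν := fun j hj =>
      divDiffSeq_congr f fun i hi => update_of_ne (by omega) _ _
    have hg : ∀ j < k, divDiffSeq g (k + 1 - j) (fun i => ν (j + i)) =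
        (divDiffSeq g (k - j) (fun i => ν (j + i)) -
          divDiffSeq g (k - j) (fun i => ν' (j + i))) / ((ν k : ℂ) - ν (k + 1)) := by
      intro j hj
      rw [show k + 1 - j = k - j + 1 by omega, divDiffSeq_succ, update_comp_add_left ν hj.le]
      simp only [show j + (k - j) = k by omega, show j + (k - j + 1) = k + 1 by omega]
    have hsum : ∑ j ∈ range k, divDiffSeq f j ν * divDiffSeq g (k + 1 - j) (fun i => ν (j + i)) =
        (∑ j ∈ range k, divDiffSeq f j ν * divDiffSeq g (k - j) (fun i => ν (j + i)) -
          ∑ j ∈ range k, divDiffSeq f j ν' * divDiffSeq g (k - j) (fun i => ν' (j + i))) /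
          ((ν k : ℂ) - ν (k + 1)) := by
      rw [← sum_sub_distrib, sum_div]
      refine sum_congr rfl fun j hj => ?_
      rw [hf j (mem_range.1 hj), hg j (mem_range.1 hj)]
      ring
    rw [divDiffSeq_succ, ih ν (hν.mono (Set.Iic_subset_Iic.2 k.le_succ)),
      ih ν' (Set.InjOn.update_succ hν)]
    simp only [sum_range_succ, hsum, Nat.sub_self, Nat.add_sub_cancel_left, divDiffSeq_zero,
      divDiffSeq_one, divDiffSeq_succ f k, add_zero, ν', update_self]
    field_simp
    ring

def leibnizSum (F G : (j : ℕ) → (Fin (j + 1) → ℝ) → ℂ) (k : ℕ) (lam : Fin (k + 1) → ℝ) : ℂ :=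
  ∑ j : Fin (k + 1),
    F j.val (fun i : Fin (j.val + 1) => lam ⟨i.val, i.isLt.trans_le j.isLt⟩) *
      G (k - j.val)
        (fun i : Fin (k - j.val + 1) => lam ⟨j.val + i.val, by grind⟩)

theorem divDiff_mul (f g : ℝ → ℂ) (k : ℕ) (lam : Fin (k + 1) → ℝ) (hlam : Injective lam) :
    divDiff (fun x => f x * g x) k lam = leibnizSum (divDiff f) (divDiff g) k lam := by
  set ν : ℕ → ℝ := fun n => if h : n < k + 1 then lam ⟨n, h⟩ else 0
  have hν : Set.InjOn ν (Set.Iic k) := fun a ha b hb hab => congrArg Fin.val <| hlam <|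
    (dif_pos (Nat.lt_succ_of_le ha)).symm.trans (hab.trans (dif_pos (Nat.lt_succ_of_le hb)))
  have := divDiffSeq_mul f g k ν hν
  simp only [divDiffSeq, ← Fin.sum_univ_eq_sum_range] at this
  convert this using 1
  · congr 1; funext i; simp [ν, i.is_le]
  · refine sum_congr rfl fun j _ => ?_
    congr 2 <;> funext i <;> simp [ν] <;> omega

theorem leibnizSum_congr_of_injective {F G F' G' : (j : ℕ) → (Fin (j + 1) → ℝ) → ℂ} {k : ℕ}
    (hF : ∀ j ≤ k, ∀ mu, Injective mu → F j mu = F' j mu)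
    (hG : ∀ j ≤ k, ∀ mu, Injective mu → G j mu = G' j mu)
    {lam : Fin (k + 1) → ℝ} (hlam : Injective lam) :
    leibnizSum F G k lam = leibnizSum F' G' k lam := by
  refine sum_congr rfl fun j _ => ?_
  rw [hF _ (by omega) _ fun a b h => Fin.ext (by simpa [Fin.ext_iff] using hlam h),
    hG _ (by omega) _ fun a b h => Fin.ext (by simpa [Fin.ext_iff] using hlam h)]

theorem continuous_leibnizSum {F G : (j : ℕ) → (Fin (j + 1) → ℝ) → ℂ} {k : ℕ}
    (hF : ∀ j ≤ k, Continuous (F j)) (hG : ∀ j ≤ k, Continuous (G j)) :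
    Continuous (leibnizSum F G k) := by
  refine continuous_finsetSum _ fun j _ => ?_
  exact ((hF j (by omega)).comp (by fun_prop)).mul ((hG _ (by omega)).comp (by fun_prop))

theorem dense_setOf_injective (ι : Type*) [Finite ι] : Dense {x : ι → ℝ | Injective x} := by
  have hpair : ∀ i j : ι, i ≠ j → Dense {x : ι → ℝ | x i ≠ x j} := fun i j hij => by
    classical
    have hsurj : Surjective (LinearMap.proj (R := ℝ) (φ := fun _ : ι => ℝ) i -
        LinearMap.proj (R := ℝ) (φ := fun _ : ι => ℝ) j) :=
      fun t => ⟨Pi.single i t, by simp [hij.symm]⟩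
    simpa [Set.compl_def, sub_eq_zero] using (dense_compl_singleton (0 : ℝ)).preimage
      (LinearMap.isOpenMap_of_finiteDimensional _ hsurj)
  have : {x : ι → ℝ | Injective x} = ⋂ p : {p : ι × ι // p.1 ≠ p.2}, {x | x p.1.1 ≠ x p.1.2} := by
    ext x
    simp [Injective, not_imp_not]
  rw [this]
  exact dense_iInter_of_isOpen (fun p => isOpen_ne_fun (continuous_apply _) (continuous_apply _))
    fun p => hpair _ _ p.2

/-- Proposition 2.3(iii), the product rule for divided differences:
for distinct `λ_1, …, λ_{k+1}`,
`(fg)^{[k]}(λ_1,…,λ_{k+1}) = ∑_{j=0}^k f^{[j]}(λ_1,…,λ_{j+1}) g^{[k-j]}(λ_{j+1},…,λ_{k+1})`;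
and if `f, g ∈ C^k(ℝ)`, the same formula holds for all `λ ∈ ℝ^{k+1}` for the (unique)
continuous extensions of the divided differences. -/
theorem stmt_7 (k : ℕ) (f g : ℝ → ℂ) :
    (∀ lam : Fin (k + 1) → ℝ, Function.Injective lam →
        divDiff (fun x => f x * g x) k lam =
          ∑ j : Fin (k + 1),
            divDiff f j.val
                (fun i : Fin (j.val + 1) =>
                  lam ⟨i.val, by have := i.isLt; have := j.isLt; omega⟩) *
              divDiff g (k - j.val)
                (fun i : Fin (k - j.val + 1) =>
                  lam ⟨j.val + i.val, by have := i.isLt; have := j.isLt; omega⟩)) ∧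
      (ContDiff ℝ (k : ℕ∞) f → ContDiff ℝ (k : ℕ∞) g →
        ∀ (F G : (j : ℕ) → (Fin (j + 1) → ℝ) → ℂ) (H : (Fin (k + 1) → ℝ) → ℂ),
          (∀ j, j ≤ k → Continuous (F j) ∧
            ∀ mu : Fin (j + 1) → ℝ, Function.Injective mu → F j mu = divDiff f j mu) →
          (∀ j, j ≤ k → Continuous (G j) ∧
            ∀ mu : Fin (j + 1) → ℝ, Function.Injective mu → G j mu = divDiff g j mu) →
          (Continuous H ∧ ∀ mu : Fin (k + 1) → ℝ, Function.Injective mu →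
            H mu = divDiff (fun x => f x * g x) k mu) →
          ∀ lam : Fin (k + 1) → ℝ,
            H lam =
              ∑ j : Fin (k + 1),
                F j.val
                    (fun i : Fin (j.val + 1) =>
                      lam ⟨i.val, by have := i.isLt; have := j.isLt; omega⟩) *
                  G (k - j.val)
                    (fun i : Fin (k - j.val + 1) =>
                      lam ⟨j.val + i.val, by have := i.isLt; have := j.isLt; omega⟩)) := by
  refine ⟨divDiff_mul f g k, fun _ _ F G H hF hG hH => congrFun ?_⟩
  refine Continuous.ext_on (dense_setOf_injective _) hH.1
    (continuous_leibnizSum (fun j hj => (hF j hj).1) fun j hj => (hG j hj).1) fun mu hmu => ?_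
  rw [hH.2 mu hmu, divDiff_mul f g k mu hmu]
  exact (leibnizSum_congr_of_injective (fun j hj => (hF j hj).2) (fun j hj => (hG j hj).2)
    hmu).symm
end

section
/- Let Ξ be a Polish space and (Σ, 𝓗, ρ) a σ-finite measure space. If φ : Ξ × Σ → ℂ is measurable with respect to the product σ-algebra 𝓑_Ξ ⊗ 𝓗 (𝓑_Ξ the Borel σ-algebra of Ξ), then the function Σ ∋ σ ↦ sup_{ξ ∈ Ξ} |φ(ξ,σ)| ∈ [0,∞] is measurable with respect to the ρ-completion of 𝓗 (and the Borel σ-algebra of [0,∞]). -/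
/-!
For `a : ℝ≥0∞`, the superlevel set `{σ | a < ⨆ ξ, ‖φ (ξ, σ)‖₊}` is the projection to `S` of the
measurable set `{a < ‖φ‖₊} ⊆ Ξ × S`. A product-measurable set involves only countably many
measurable subsets of `S`, so it is the preimage of a measurable `N ⊆ Ξ × (ℕ → Bool)` under
`id × g` for some measurable `g : S → ℕ → Bool`; its projection is then the preimage under `g` of
the analytic set `Prod.snd '' N`. Analytic sets are null measurable for every finite measure
(capacitability: `range f`, `f` continuous on `ℕ → ℕ`, is exhausted up to `ε` by the compact
images of boxes `Iic n`, whose bounds are chosen one coordinate at a time), and the σ-finite `ρ`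
may be replaced by the equivalent finite measure `ρ.toFinite`.
-/

open MeasureTheory Set
open scoped ENNReal

theorem isCompact_Iic_of_orderBot {α : Type*} [TopologicalSpace α] [Preorder α] [OrderBot α]
    [CompactIccSpace α] (a : α) : IsCompact (Iic a) :=
  Icc_bot (a := a) ▸ isCompact_Icc

theorem MeasureTheory.exists_measure_iUnion_le_add {α : Type*} [MeasurableSpace α]
    (μ : Measure α) {s : ℕ → Set α} (hs : Monotone s) (hfin : μ (⋃ n, s n) ≠ ∞) {c : ℝ≥0∞}
    (hc : c ≠ 0) : ∃ n, μ (⋃ n, s n) ≤ μ (s n) + c := by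
  rcases eq_or_ne (μ (⋃ n, s n)) 0 with h0 | h0
  · exact ⟨0, by simp [h0]⟩
  obtain ⟨n, hn⟩ := ((tendsto_measure_iUnion_atTop hs).eventually
    (lt_mem_nhds (ENNReal.sub_lt_self hfin h0 hc))).exists
  exact ⟨n, tsub_le_iff_right.mp hn.le⟩

theorem IsOpen.exists_forall_lt_le_subset {W : Set (ℕ → ℕ)} (hW : IsOpen W) {n : ℕ → ℕ}
    (hn : Iic n ⊆ W) : ∃ k, {x | ∀ i < k, x i ≤ n i} ⊆ W := by
  let := PiNat.metricSpace (E := fun _ : ℕ => ℕ)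
  obtain ⟨δ, hδ, hδW⟩ := (isCompact_Iic_of_orderBot n).exists_thickening_subset_open hW hn
  obtain ⟨k, hk⟩ := exists_pow_lt_of_lt_one hδ (by norm_num : (1 / 2 : ℝ) < 1)
  refine ⟨k, fun x hx => hδW (Metric.mem_thickening_iff.2 ⟨x ⊓ n, mem_Iic.2 inf_le_right, ?_⟩)⟩
  have hcyl : x ∈ PiNat.cylinder (x ⊓ n) k := fun i hi => (inf_eq_left.2 (hx i hi)).symm
  exact (PiNat.mem_cylinder_iff_dist_le.1 hcyl).trans_lt hk

theorem iInter_closure_image_subset_image_Iic {Z : Type*} [TopologicalSpace Z] [T2Space Z]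
    [RegularSpace Z] {f : (ℕ → ℕ) → Z} (hf : Continuous f) (n : ℕ → ℕ) :
    ⋂ k, closure (f '' {x | ∀ i < k, x i ≤ n i}) ⊆ f '' Iic n := by
  intro z hz
  by_contra hzK
  have hK : IsClosed (f '' Iic n) := ((isCompact_Iic_of_orderBot n).image hf).isClosed
  obtain ⟨U, hU, V, hV, hUV⟩ := Filter.disjoint_iff.1
    (disjoint_nhdsSet_nhds.2 (by rwa [hK.closure_eq]))
  obtain ⟨k, hk⟩ := (isOpen_interior.preimage hf).exists_forall_lt_le_subset
    (image_subset_iff.1 (subset_interior_iff_mem_nhdsSet.2 hU))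
  obtain ⟨_, hzV, x, hx, rfl⟩ := mem_closure_iff_nhds.1 (mem_iInter.1 hz k) V hV
  exact hUV.ne_of_mem (interior_subset (hk hx)) hzV rfl

theorem MeasureTheory.exists_isCompact_subset_range_measure_le_add {Z : Type*}
    [TopologicalSpace Z] [T2Space Z] [RegularSpace Z] [MeasurableSpace Z] [OpensMeasurableSpace Z]
    (μ : Measure Z) [IsFiniteMeasure μ] {f : (ℕ → ℕ) → Z} (hf : Continuous f) {ε : ℝ≥0∞}
    (hε : ε ≠ 0) : ∃ K ⊆ range f, IsCompact K ∧ μ (range f) ≤ μ K + ε := by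
  obtain ⟨δ, hδpos, hδsum⟩ := ENNReal.exists_pos_sum_of_countable hε ℕ
  have hbound : ∀ (k : ℕ) (s : Set (ℕ → ℕ)), ∃ m,
      μ (f '' s) ≤ μ (f '' (s ∩ {x | x k ≤ m})) + δ k := by
    intro k s
    have hs : f '' s = ⋃ m, f '' (s ∩ {x | x k ≤ m}) := by
      rw [← image_iUnion, ← inter_iUnion,
        iUnion_eq_univ_iff.2 fun x => ⟨x k, mem_ofPred.2 le_rfl⟩, inter_univ]
    rw [hs]
    exact exists_measure_iUnion_le_add μ (s := fun m => f '' (s ∩ {x | x k ≤ m}))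
      (fun a b hab => image_mono (inter_subset_inter_right _ fun x hx => le_trans hx hab))
      (measure_ne_top _ _) (ENNReal.coe_ne_zero.2 (hδpos k).ne')
  choose m hm using hbound
  -- bound the coordinates greedily, one at a time
  let S : ℕ → Set (ℕ → ℕ) := fun k => Nat.rec univ (fun k s => s ∩ {x | x k ≤ m k s}) k
  let n : ℕ → ℕ := fun k => m k (S k)
  have hS : ∀ k, S k = {x | ∀ i < k, x i ≤ n i} := by
    intro k
    induction k with
    | zero => simp [S]
    | succ k ih =>
      change S k ∩ {x | x k ≤ n k} = _
      ext x
      simp only [ih, mem_inter_iff, mem_ofPred_eq, Nat.lt_succ_iff_lt_or_eq, or_imp, forall_and,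
        forall_eq]
  have hμS : ∀ k, μ (range f) ≤ μ (f '' S k) + ∑ i ∈ Finset.range k, (δ i : ℝ≥0∞) := by
    intro k
    induction k with
    | zero => simp [S, image_univ]
    | succ k ih =>
      calc μ (range f) ≤ μ (f '' S k) + ∑ i ∈ Finset.range k, (δ i : ℝ≥0∞) := ih
        _ ≤ μ (f '' S (k + 1)) + δ k + ∑ i ∈ Finset.range k, (δ i : ℝ≥0∞) := by
          gcongr; exact hm k (S k)
        _ = μ (f '' S (k + 1)) + ∑ i ∈ Finset.range (k + 1), (δ i : ℝ≥0∞) := by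
          rw [Finset.sum_range_succ]; ring
  have hC : Antitone fun k => closure (f '' S k) := fun k l hkl => by
    simp only [hS]
    exact closure_mono (image_mono fun x hx i hi => hx i (hi.trans_le hkl))
  refine ⟨f '' Iic n, image_subset_range _ _, (isCompact_Iic_of_orderBot n).image hf, ?_⟩
  calc μ (range f) ≤ (⨅ k, μ (closure (f '' S k))) + ε := by
        rw [ENNReal.iInf_add]
        exact le_iInf fun k => (hμS k).trans (add_le_add (measure_mono subset_closure)
          ((ENNReal.sum_le_tsum _).trans hδsum.le))
    _ = μ (⋂ k, closure (f '' S k)) + ε := by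
        rw [hC.measure_iInter (fun k => isClosed_closure.nullMeasurableSet)
          ⟨0, measure_ne_top _ _⟩]
    _ ≤ μ (f '' Iic n) + ε := by
        gcongr
        simpa only [hS] using iInter_closure_image_subset_image_Iic hf n

theorem MeasureTheory.AnalyticSet.nullMeasurableSet {Z : Type*} [TopologicalSpace Z] [T2Space Z]
    [RegularSpace Z] [MeasurableSpace Z] [OpensMeasurableSpace Z] {s : Set Z}
    (hs : AnalyticSet s) (μ : Measure Z) [IsFiniteMeasure μ] : NullMeasurableSet s μ := by
  rw [AnalyticSet] at hs
  rcases hs with rfl | ⟨f, hf, rfl⟩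
  · exact .empty
  choose K hKsub hK hμK using fun j : ℕ => exists_isCompact_subset_range_measure_le_add μ hf
    (ENNReal.inv_ne_zero.2 (ENNReal.natCast_ne_top j))
  have hmeas : MeasurableSet (⋃ j, K j) := .iUnion fun j => (hK j).isClosed.measurableSet
  have hle : μ (range f) ≤ μ (⋃ j, K j) := by
    refine ENNReal.le_of_forall_pos_le_add fun δ hδ _ => ?_
    obtain ⟨j, hj⟩ := ENNReal.exists_inv_nat_lt (ENNReal.coe_ne_zero.2 hδ.ne')
    exact (hμK j).trans (add_le_add (measure_mono (subset_iUnion K j)) hj.le)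
  exact hmeas.nullMeasurableSet.congr (ae_eq_of_subset_of_measure_ge (iUnion_subset hKsub) hle
    hmeas.nullMeasurableSet (measure_ne_top _ _))

theorem MeasurableSet.exists_eq_preimage_prodMap_natBool {α β : Type*} [MeasurableSpace α]
    [MeasurableSpace β] {M : Set (α × β)} (hM : MeasurableSet M) : ∃ g : β → ℕ → Bool, Measurable g ∧
      ∃ N : Set (α × (ℕ → Bool)), MeasurableSet N ∧ M = Prod.map id g ⁻¹' N := by
  classical
  rw [← generateFrom_prod] at hM
  induction M, hM using MeasurableSpace.generateFrom_induction with
  | hC _ hst =>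
    obtain ⟨s, hs, t, ht, rfl⟩ := hst
    refine ⟨fun b _ => decide (b ∈ t), measurable_pi_lambda _ fun _ => measurable_to_bool ?_,
      s ×ˢ ((· 0) ⁻¹' {true}), hs.prod (measurable_pi_apply 0 (measurableSet_singleton true)), ?_⟩
    · simpa [preimage] using ht
    · ext; simp
  | empty => exact ⟨fun _ _ => true, measurable_const, ∅, .empty, rfl⟩
  | compl _ _ ih =>
    obtain ⟨g, hg, N, hN, rfl⟩ := ih
    exact ⟨g, hg, Nᶜ, hN.compl, rfl⟩
  | iUnion M _ ih =>
    choose g hg N hN hMN using ih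
    let G : β → ℕ → Bool := fun b k => g (Nat.unpair k).1 b (Nat.unpair k).2
    let π : ℕ → (ℕ → Bool) → ℕ → Bool := fun n y i => y (Nat.pair n i)
    have hπ : ∀ n, Measurable (π n) := fun n =>
      measurable_pi_lambda _ fun i => measurable_pi_apply _
    refine ⟨G, measurable_pi_lambda _ fun k => measurable_pi_apply _ |>.comp (hg _),
      ⋃ n, Prod.map id (π n) ⁻¹' N n,
      .iUnion fun n => measurable_fst.prodMk ((hπ n).comp measurable_snd) (hN n), ?_⟩
    have hfactor : ∀ n, Prod.map (@id α) (π n) ∘ Prod.map id G = Prod.map id (g n) := fun n => by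
      ext <;> simp [G, π]
    simp only [preimage_iUnion, hMN, ← preimage_comp, hfactor]

theorem MeasurableSet.nullMeasurableSet_image_snd {Ξ S : Type*} [MeasurableSpace Ξ]
    [StandardBorelSpace Ξ] [MeasurableSpace S] {M : Set (Ξ × S)} (hM : MeasurableSet M)
    (ρ : Measure S) [SFinite ρ] : NullMeasurableSet (Prod.snd '' M) ρ := by
  obtain ⟨g, hg, N, hN, rfl⟩ := hM.exists_eq_preimage_prodMap_natBool
  have himage : Prod.snd '' (Prod.map id g ⁻¹' N) = g ⁻¹' (Prod.snd '' N) := by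
    ext σ; simp
  have hA : AnalyticSet (Prod.snd '' N) := hN.analyticSet_image measurable_snd
  rw [himage]
  exact ((hA.nullMeasurableSet (ρ.toFinite.map g)).preimage
    (hg.quasiMeasurePreserving _)).mono_ac (absolutelyContinuous_toFinite ρ)

/-- Lemma 2.5, Measurability: if `Ξ` is Polish, `(Σ, 𝓗, ρ)` is a σ-finite
measure space, and `φ : Ξ × Σ → ℂ` is product measurable, then
`σ ↦ sup_{ξ ∈ Ξ} |φ(ξ,σ)| ∈ [0,∞]` is measurable with respect to the `ρ`-completion of `𝓗`
(i.e. it is null-measurable with respect to `ρ`). -/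
theorem stmt_9 (Ξ : Type) [TopologicalSpace Ξ] [PolishSpace Ξ] [MeasurableSpace Ξ]
    [BorelSpace Ξ] (S : Type) [MeasurableSpace S] (ρ : Measure S) [SigmaFinite ρ]
    (φ : Ξ × S → ℂ) (hφ : Measurable φ) :
    NullMeasurable (fun σ : S => ⨆ ξ : Ξ, (‖φ (ξ, σ)‖₊ : ℝ≥0∞)) ρ := by
  have hsuperlevel : ∀ a : ℝ≥0∞, (fun σ : S => ⨆ ξ : Ξ, (‖φ (ξ, σ)‖₊ : ℝ≥0∞)) ⁻¹' Ioi a =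
      Prod.snd '' {p : Ξ × S | a < ‖φ p‖₊} := fun a => by
    ext σ
    simp [lt_iSup_iff]
  exact measurable_of_Ioi fun a => hsuperlevel a ▸
    (measurableSet_lt measurable_const hφ.nnnorm.coe_nnreal_ennreal).nullMeasurableSet_image_snd ρ
end

section
/- Fix k ∈ ℕ. Then C^{k+1}(ℝ) ⊆ W_k(ℝ)_loc: for every f ∈ C^{k+1}(ℝ) and every r > 0 there exists a Borel complex measure μ on ℝ with ∫_ℝ |ξ|^k |μ|(dξ) < ∞ such that f(λ) = ∫_ℝ e^{iλξ} μ(dξ) for all λ ∈ [-r,r]. -/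
open MeasureTheory Filter
open scoped ENNReal NNReal

/-!
Multiply `f` by a smooth bump equal to `1` on `[-r, r]` and expand the result `g` in a Fourier
series on an interval of length `T` outside of which `g` and all its derivatives vanish.
Integrating by parts `k + 1` times, the `n`-th coefficient of `g` is `(T / 2πin) ^ (k + 1)` times
that of `g⁽ᵏ⁺¹⁾`, which is square summable by Parseval, so Cauchy–Schwarz gives
`∑ |n| ^ k |cₙ| < ∞`. On `[-r, r]`, `f` is then the Fourier transform of the discrete measure
`∑ cₙ δ_{2πn/T}`, whose polar decomposition is the required pair `(ν, h)`.
-/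

open Complex Real

section DiscreteMeasure

variable {ι α : Type*} [MeasurableSpace α]

lemma isFiniteMeasure_sum_smul_dirac {w : ι → ℝ≥0} (hw : Summable w) (x : ι → α) :
    IsFiniteMeasure (Measure.sum fun i => w i • Measure.dirac (x i)) := by
  constructor
  simpa [Measure.sum_apply _ MeasurableSet.univ] using
    (ENNReal.tsum_coe_ne_top_iff_summable.2 hw).lt_top

lemma lintegral_sum_smul_dirac [MeasurableSingletonClass α] (w : ι → ℝ≥0) (x : ι → α)
    (φ : α → ℝ≥0∞) :
    ∫⁻ a, φ a ∂(Measure.sum fun i => w i • Measure.dirac (x i)) = ∑' i, w i * φ (x i) := by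
  rw [lintegral_sum_measure]
  refine tsum_congr fun i => ?_
  rw [← Measure.coe_nnreal_smul, lintegral_smul_measure, lintegral_dirac, smul_eq_mul]

lemma integral_sum_smul_dirac [Countable ι] [MeasurableSingletonClass α] {E : Type*}
    [NormedAddCommGroup E] [NormedSpace ℝ E] [CompleteSpace E] (w : ι → ℝ≥0) (x : ι → α)
    {φ : α → E} (hφ : Integrable φ (Measure.sum fun i => w i • Measure.dirac (x i))) :
    ∫ a, φ a ∂(Measure.sum fun i => w i • Measure.dirac (x i)) = ∑' i, w i • φ (x i) := by
  rw [integral_sum_measure hφ]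
  simp [integral_smul_nnreal_measure, integral_dirac]

end DiscreteMeasure

lemma measurable_round_div (ω : ℝ) : Measurable fun x : ℝ => round (x / ω) := by
  simp only [round_eq]
  exact Int.measurable_floor.comp ((measurable_id.div_const ω).add_const _)

lemma exists_polar_measure_tsum_exp (k : ℕ) {ω : ℝ} (hω : ω ≠ 0) {c : ℤ → ℂ}
    (hc : Summable fun n => ‖c n‖) (hck : Summable fun n => ‖c n‖ * |(n : ℝ)| ^ k) :
    ∃ (ν : Measure ℝ) (h : ℝ → ℂ), IsFiniteMeasure ν ∧ Measurable h ∧ (∀ ξ, ‖h ξ‖ = 1) ∧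
      (∫⁻ ξ, (‖ξ‖₊ : ℝ≥0∞) ^ k ∂ν) ≠ ∞ ∧
      ∀ lam : ℝ, ∫ ξ, exp (I * lam * ξ) * h ξ ∂ν = ∑' n : ℤ, c n * exp (I * lam * (n * ω)) := by
  set ν := Measure.sum fun n : ℤ => ‖c n‖₊ • Measure.dirac (n * ω)
  -- `round (ξ / ω)` recovers `n` from the atom `ξ = n * ω`.
  set h : ℝ → ℂ := fun ξ => exp (arg (c (round (ξ / ω))) * I)
  have hν : IsFiniteMeasure ν :=
    isFiniteMeasure_sum_smul_dirac (NNReal.summable_coe.1 hc) _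
  have hh : Measurable h :=
    Measurable.comp (g := fun m : ℤ => exp (arg (c m) * I)) measurable_from_top
      (measurable_round_div ω)
  have hnorm : ∀ ξ, ‖h ξ‖ = 1 := fun ξ => norm_exp_ofReal_mul_I _
  have hpolar : ∀ n : ℤ, (‖c n‖ : ℂ) * h (n * ω) = c n := fun n => by
    simp [h, hω, norm_mul_exp_arg_mul_I]
  refine ⟨ν, h, hν, hh, hnorm, ?_, fun lam => ?_⟩
  · rw [lintegral_sum_smul_dirac]
    simp_rw [← ENNReal.coe_pow, ← ENNReal.coe_mul]
    refine ENNReal.tsum_coe_ne_top_iff_summable.2 (NNReal.summable_coe.1 ?_)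
    refine (hck.mul_left (|ω| ^ k)).congr fun n => ?_
    simp only [NNReal.coe_mul, NNReal.coe_pow, coe_nnnorm, Real.norm_eq_abs, abs_mul, mul_pow]
    ring
  · rw [integral_sum_smul_dirac]
    · refine tsum_congr fun n => ?_
      rw [NNReal.smul_def, coe_nnnorm, real_smul]
      push_cast
      linear_combination exp (I * lam * (n * ω)) * hpolar n
    · refine Integrable.of_bound (by fun_prop) 1 (ae_of_all _ fun ξ => ?_)
      simp [hnorm, norm_exp]

lemma fourierCoeffOn_eq_mul_fourierCoeffOn_deriv {a b : ℝ} (hab : a < b) {g g' : ℝ → ℂ}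
    (hg : ∀ x ∈ Set.uIcc a b, HasDerivAt g (g' x) x) (hg' : IntervalIntegrable g' volume a b)
    (ha : g a = 0) (hb : g b = 0) {n : ℤ} (hn : n ≠ 0) :
    fourierCoeffOn hab g n = (b - a) / (2 * π * I * n) * fourierCoeffOn hab g' n := by
  rw [fourierCoeffOn_of_hasDerivAt hab hn hg hg', ha, hb]
  have : (π : ℂ) ≠ 0 := ofReal_ne_zero.2 pi_ne_zero
  have : (n : ℂ) ≠ 0 := Int.cast_ne_zero.2 hn
  field_simp
  ring

lemma fourierCoeffOn_eq_pow_mul_fourierCoeffOn_iteratedDeriv {a b : ℝ} (hab : a < b) {m : ℕ}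
    {g : ℝ → ℂ} (hg : ContDiff ℝ m g) (ha : ∀ j < m, iteratedDeriv j g a = 0)
    (hb : ∀ j < m, iteratedDeriv j g b = 0) {n : ℤ} (hn : n ≠ 0) :
    fourierCoeffOn hab g n =
      ((b - a) / (2 * π * I * n)) ^ m * fourierCoeffOn hab (iteratedDeriv m g) n := by
  induction m with
  | zero => simp
  | succ m ih =>
    have hderiv : ∀ x, HasDerivAt (iteratedDeriv m g) (iteratedDeriv (m + 1) g x) x := fun x => by
      rw [iteratedDeriv_succ]
      exact ((hg.differentiable_iteratedDeriv m (by norm_cast; omega)) x).hasDerivAt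
    rw [ih (hg.of_le (by norm_cast; omega)) (fun j hj => ha j (by omega))
      (fun j hj => hb j (by omega)), fourierCoeffOn_eq_mul_fourierCoeffOn_deriv hab
      (fun x _ => hderiv x) ((hg.continuous_iteratedDeriv (m + 1) le_rfl).intervalIntegrable a b)
      (ha m (by omega)) (hb m (by omega)) hn]
    ring

lemma summable_sq_norm_fourierCoeffOn {a b : ℝ} (hab : a < b) {g : ℝ → ℂ}
    (hg : ContinuousOn g (Set.Icc a b)) :
    Summable fun n : ℤ => ‖fourierCoeffOn hab g n‖ ^ 2 := by
  obtain ⟨C, hC⟩ := isCompact_Icc.exists_bound_of_continuousOn hg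
  refine (hasSum_sq_fourierCoeffOn hab (MemLp.of_bound ?_ C ?_)).summable
  · exact (hg.mono Set.Ioc_subset_Icc_self).aestronglyMeasurable measurableSet_Ioc
  · exact ae_restrict_of_forall_mem measurableSet_Ioc fun x hx =>
      hC x (Set.Ioc_subset_Icc_self hx)

lemma hasSum_fourierCoeffOn_mul_exp {a b : ℝ} (hab : a < b) {g : ℝ → ℂ}
    (hg : ContinuousOn g (Set.Icc a b)) (hgab : g a = g b) (hc : Summable (fourierCoeffOn hab g))
    {x : ℝ} (hx : x ∈ Set.Ico a b) :
    HasSum (fun n : ℤ => fourierCoeffOn hab g n * exp (2 * π * I * n * x / (b - a))) (g x) := by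
  obtain ⟨T, rfl⟩ : ∃ T, b = a + T := ⟨b - a, by ring⟩
  have : Fact (0 < T) := ⟨by linarith⟩
  let G : C(AddCircle T, ℂ) := ⟨AddCircle.liftIco T a g, AddCircle.liftIco_continuous hgab hg⟩
  have hcoeff : ∀ n, fourierCoeff G n = fourierCoeffOn hab g n := fourierCoeff_liftIco_eq g
  have hGx : G x = g x := AddCircle.liftIco_coe_apply hx
  rw [← hGx]
  convert has_pointwise_sum_fourier_series_of_summable (f := G)
    (hc.congr fun n => (hcoeff n).symm) x using 2 with n
  rw [hcoeff, fourier_coe_apply, smul_eq_mul]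
  push_cast
  rw [add_sub_cancel_left]

lemma summable_norm_mul_abs_pow_of_le_mul {c A : ℤ → ℂ} {K : ℝ} {k j : ℕ} (hjk : j ≤ k)
    (hA : Summable fun n => ‖A n‖ ^ 2)
    (hcA : ∀ n : ℤ, n ≠ 0 → ‖c n‖ * |(n : ℝ)| ^ (k + 1) ≤ K * ‖A n‖) :
    Summable fun n : ℤ => ‖c n‖ * |(n : ℝ)| ^ j := by
  have hinv : Summable fun n : ℤ => |(n : ℝ)|⁻¹ ^ 2 := by
    simpa [inv_pow, sq_abs] using Real.summable_one_div_int_pow.2 one_lt_two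
  have hAinv : Summable fun n : ℤ => ‖A n‖ * |(n : ℝ)|⁻¹ :=
    Real.summable_mul_of_Lp_Lq_of_nonneg .two_two (fun _ => norm_nonneg _)
      (fun _ => by positivity) (by simpa [rpow_two] using hA) (by simpa [rpow_two] using hinv)
  refine (hAinv.mul_left K).of_norm_bounded_eventually ?_
  filter_upwards [eventually_cofinite_ne 0] with n hn
  have hn1 : 1 ≤ |(n : ℝ)| := by exact_mod_cast Int.one_le_abs hn
  rw [Real.norm_of_nonneg (by positivity), ← mul_assoc, le_mul_inv_iff₀ (by positivity)]
  calc ‖c n‖ * |(n : ℝ)| ^ j * |(n : ℝ)| ≤ ‖c n‖ * |(n : ℝ)| ^ k * |(n : ℝ)| := by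
        gcongr
    _ = ‖c n‖ * |(n : ℝ)| ^ (k + 1) := by ring
    _ ≤ K * ‖A n‖ := hcA n hn

lemma summable_norm_fourierCoeffOn_mul_abs_pow {a b : ℝ} (hab : a < b) {k : ℕ} {g : ℝ → ℂ}
    (hg : ContDiff ℝ (k + 1) g) (ha : ∀ j ≤ k, iteratedDeriv j g a = 0)
    (hb : ∀ j ≤ k, iteratedDeriv j g b = 0) {j : ℕ} (hjk : j ≤ k) :
    Summable fun n : ℤ => ‖fourierCoeffOn hab g n‖ * |(n : ℝ)| ^ j := by
  refine summable_norm_mul_abs_pow_of_le_mul (K := ((b - a) / (2 * π)) ^ (k + 1)) hjk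
    (summable_sq_norm_fourierCoeffOn hab
      (hg.continuous_iteratedDeriv (k + 1) le_rfl).continuousOn) fun n hn => le_of_eq ?_
  rw [fourierCoeffOn_eq_pow_mul_fourierCoeffOn_iteratedDeriv hab (by exact_mod_cast hg)
    (fun j hj => ha j (by omega)) (fun j hj => hb j (by omega)) hn, norm_mul, norm_pow]
  have hba : ‖(b : ℂ) - a‖ = b - a := by
    rw [← Complex.ofReal_sub, Complex.norm_real, Real.norm_of_nonneg (sub_pos.2 hab).le]
  have : |(n : ℝ)| ≠ 0 := abs_ne_zero.2 (by exact_mod_cast hn)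
  simp only [norm_div, norm_mul, hba, Complex.norm_ofNat, norm_real, Real.norm_of_nonneg pi_pos.le,
    norm_I, norm_intCast, mul_one]
  rw [mul_right_comm, ← mul_pow, div_mul_eq_mul_div, mul_div_mul_right _ _ this, mul_comm]

lemma iteratedDeriv_eq_zero_of_notMem_tsupport {𝕜 F : Type*} [NontriviallyNormedField 𝕜]
    [NormedAddCommGroup F] [NormedSpace 𝕜 F] {f : 𝕜 → F} (n : ℕ) {x : 𝕜} (hx : x ∉ tsupport f) :
    iteratedDeriv n f x = 0 := by
  rw [iteratedDeriv_eq_iteratedFDeriv,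
    image_eq_zero_of_notMem_tsupport fun h => hx (tsupport_iteratedFDeriv_subset n h)]
  rfl

lemma exists_contDiff_eqOn_Icc_tsupport_subset {E : Type*} [NormedAddCommGroup E]
    [NormedSpace ℝ E] {n : ℕ∞} {f : ℝ → E} (hf : ContDiff ℝ n f) {r : ℝ} (hr : 0 < r) :
    ∃ g : ℝ → E, ContDiff ℝ n g ∧ Set.EqOn g f (Set.Icc (-r) r) ∧
      tsupport g ⊆ Set.Icc (-(r + 1)) (r + 1) := by
  let φ : ContDiffBump (0 : ℝ) := ⟨r, r + 1, hr, by linarith⟩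
  refine ⟨fun x => φ x • f x, φ.contDiff.smul hf, fun x hx => ?_, ?_⟩
  · change φ x • f x = f x
    rw [φ.one_of_mem_closedBall, one_smul]
    rwa [Real.closedBall_eq_Icc, zero_sub, zero_add]
  · refine (tsupport_smul_subset_left _ _).trans ?_
    rw [φ.tsupport_eq, Real.closedBall_eq_Icc, zero_sub, zero_add]

theorem stmt_14_general (k : ℕ) (f : ℝ → ℂ)
    (hf : ContDiff ℝ ((k + 1 : ℕ) : ℕ∞) f) :
    ∀ r : ℝ, 0 < r →
      ∃ (ν : Measure ℝ) (h : ℝ → ℂ),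
        IsFiniteMeasure ν ∧ Measurable h ∧ (∀ ξ, ‖h ξ‖ = 1) ∧
        (∫⁻ ξ, (‖ξ‖₊ : ℝ≥0∞) ^ k ∂ν) ≠ ∞ ∧
        ∀ lam ∈ Set.Icc (-r) r, f lam = ∫ ξ, Complex.exp (Complex.I * lam * ξ) * h ξ ∂ν := by
  intro r hr
  obtain ⟨g, hg, hgf, hg_supp⟩ := exists_contDiff_eqOn_Icc_tsupport_subset hf hr
  have hg' : ContDiff ℝ (k + 1) g := by exact_mod_cast hg
  have hab : -(r + 2) < r + 2 := by linarith
  have hvanish : ∀ j, iteratedDeriv j g (-(r + 2)) = 0 ∧ iteratedDeriv j g (r + 2) = 0 :=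
    fun j => ⟨iteratedDeriv_eq_zero_of_notMem_tsupport j fun h => by linarith [(hg_supp h).1],
      iteratedDeriv_eq_zero_of_notMem_tsupport j fun h => by linarith [(hg_supp h).2]⟩
  have hsum : ∀ j ≤ k, Summable fun n : ℤ => ‖fourierCoeffOn hab g n‖ * |(n : ℝ)| ^ j :=
    fun j => summable_norm_fourierCoeffOn_mul_abs_pow hab hg' (fun i _ => (hvanish i).1)
      (fun i _ => (hvanish i).2)
  have hsum₀ : Summable fun n : ℤ => ‖fourierCoeffOn hab g n‖ := by simpa using hsum 0 k.zero_le
  obtain ⟨ν, h, hν, hh, hnorm, hmoment, hint⟩ := exists_polar_measure_tsum_exp k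
    (div_ne_zero (by positivity) (sub_pos.2 hab).ne' : 2 * π / (r + 2 - -(r + 2)) ≠ 0)
    hsum₀ (hsum k le_rfl)
  refine ⟨ν, h, hν, hh, hnorm, hmoment, fun lam hlam => ?_⟩
  have hseries := hasSum_fourierCoeffOn_mul_exp hab hg'.continuous.continuousOn
    (by simpa using (hvanish 0).1.trans (hvanish 0).2.symm) hsum₀.of_norm
    (x := lam) ⟨by linarith [hlam.1], by linarith [hlam.2]⟩
  rw [hint, ← hgf hlam, ← hseries.tsum_eq]
  refine tsum_congr fun n => ?_
  push_cast
  ring_nf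

/-- Lemma 3.6(iii): `C^{k+1}(ℝ) ⊆ W_k(ℝ)_loc`.  For every
`f ∈ C^{k+1}(ℝ)` and every `r > 0` there is a Borel complex measure `μ` on `ℝ` (encoded in
polar form `μ(dξ) = h(ξ) ν(dξ)`, `ν = |μ|` a finite positive Borel measure, `|h| ≡ 1`) with
`∫ |ξ|^k d|μ| < ∞` such that `f(λ) = ∫_ℝ e^{iλξ} μ(dξ)` for all `λ ∈ [-r,r]`. -/
theorem stmt_14 (k : ℕ) (hk : 1 ≤ k) (f : ℝ → ℂ)
    (hf : ContDiff ℝ ((k + 1 : ℕ) : ℕ∞) f) :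
    ∀ r : ℝ, 0 < r →
      ∃ (ν : Measure ℝ) (h : ℝ → ℂ),
        IsFiniteMeasure ν ∧ Measurable h ∧ (∀ ξ, ‖h ξ‖ = 1) ∧
        (∫⁻ ξ, (‖ξ‖₊ : ℝ≥0∞) ^ k ∂ν) ≠ ∞ ∧
        ∀ lam ∈ Set.Icc (-r) r, f lam = ∫ ξ, Complex.exp (Complex.I * lam * ξ) * h ξ ∂ν :=
  stmt_14_general k f hf
end

section
/- Fix k ∈ ℕ and 0 ≤ j ≤ k. Let μ be a Borel complex measure on ℝ with μ_{(k)} := ∫_ℝ |ξ|^k |μ|(dξ) < ∞, and let f(λ) := ∫_ℝ e^{iλξ} μ(dξ). Then f ∈ C^k(ℝ) and the divided difference f^{[j]} : ℝ^{j+1} → ℂ has ℓ^∞-integral projective tensor norm (with Ω_1 = ⋯ = Ω_{j+1} = ℝ) at most μ_{(j)}/j!, where μ_{(j)} := ∫_ℝ |ξ|^j |μ|(dξ). In particular, W_k(ℝ) ⊆ 𝒞^{[k]}(ℝ). -/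
/-!
Differentiating under the integral sign gives `f⁽ᵐ⁾(x) = ∫ (iξ)ᵐ e^{ixξ} μ(dξ)` for `m ≤ k`.
Inserting this into the simplex formula for `f^{[m]}` and applying Fubini,
`f^{[m]}(λ₀, …, λₘ) = ∫_{Δₘ × ℝ} (iξ)ᵐ e^{iξ(∑ sₗ λₗ + (1 - ∑ sₗ) λₘ)} ds μ(dξ)`,
and the exponential factors as `∏ₗ e^{i sₗ λₗ ξ} · e^{i (1 - ∑ sₗ) λₘ ξ}`, one factor per variable.
This is an integral projective decomposition over `Δₘ × ℝ` in which the product of the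
sup-norms of the factors is `|ξ|ᵐ`, so its cost is `vol(Δₘ) μ₍ₘ₎ = μ₍ₘ₎ / m!`.
-/

open MeasureTheory Filter
open scoped ENNReal NNReal

/-- The continuous extension of the `k`-th divided difference of a `C^k` function, given by
integration of the `k`-th derivative over the standard simplex (Proposition 2.3(ii)). -/
noncomputable def divDiffC (f : ℝ → ℂ) (k : ℕ) (lam : Fin (k + 1) → ℝ) : ℂ :=
  ∫ s in {s : Fin k → ℝ | (∀ i, 0 ≤ s i) ∧ ∑ i, s i ≤ 1},
    iteratedDeriv k f
      ((∑ i : Fin k, s i * lam i.castSucc) + (1 - ∑ i : Fin k, s i) * lam (Fin.last k))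

/-- The `ℓ^∞`-integral projective tensor norm of a function `φ : Ω_1 × ⋯ × Ω_m → ℂ`:
the infimum, over all `ℓ^∞`-integral projective decompositions
`(Σ, ρ, φ_1, …, φ_m)` of `φ` (with `ρ` a σ-finite measure, the `φ_j` product-measurable and
bounded in the first variable, and `φ(ω) = ∫_Σ ∏_j φ_j(ω_j, σ) ρ(dσ)`), of
`∫_Σ ∏_j sup_{ω_j} |φ_j(ω_j, σ)| ρ(dσ)`; it is `∞` if no decomposition exists. -/
noncomputable def iptNorm {m : ℕ} {Ω : Fin m → Type*} [∀ i, MeasurableSpace (Ω i)]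
    (φ : (∀ i, Ω i) → ℂ) : ℝ≥0∞ :=
  sInf {c : ℝ≥0∞ |
    ∃ (S : Type) (_ : MeasurableSpace S) (ρ : MeasureTheory.Measure S)
      (φs : ∀ i, Ω i × S → ℂ),
      MeasureTheory.SigmaFinite ρ ∧ (∀ i, Measurable (φs i)) ∧
      (∀ i σ, ∃ C : ℝ, ∀ ω, ‖φs i (ω, σ)‖ ≤ C) ∧
      (∫⁻ σ, ∏ i, ⨆ ω, (‖φs i (ω, σ)‖₊ : ℝ≥0∞) ∂ρ) ≠ ∞ ∧
      (∀ ω : ∀ i, Ω i, φ ω = ∫ σ, ∏ i, φs i (ω i, σ) ∂ρ) ∧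
      c = ∫⁻ σ, ∏ i, ⨆ ω, (‖φs i (ω, σ)‖₊ : ℝ≥0∞) ∂ρ}

/-- `‖φ‖_{r,m}` : the `ℓ^∞`-integral projective tensor norm of `φ` restricted to `[-r,r]^m`. -/
noncomputable def iptNormIcc (r : ℝ) {m : ℕ} (φ : (Fin m → ℝ) → ℂ) : ℝ≥0∞ :=
  iptNorm (Ω := fun _ : Fin m => (Set.Icc (-r) r : Set ℝ)) fun ω => φ fun i => (ω i : ℝ)

/-- `‖f‖_{𝒞^{[k]},r} = ∑_{j=0}^k ‖f^{[j]}‖_{r,j+1}`. -/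
noncomputable def cNorm (k : ℕ) (r : ℝ) (f : ℝ → ℂ) : ℝ≥0∞ :=
  ∑ j ∈ Finset.range (k + 1), iptNormIcc r (divDiffC f j)

def cornerSimplex (n : ℕ) (r : ℝ) : Set (Fin n → ℝ) :=
  {s | (∀ i, 0 ≤ s i) ∧ ∑ i, s i ≤ r}

lemma cornerSimplex_eq_empty {n : ℕ} {r : ℝ} (hr : r < 0) : cornerSimplex n r = ∅ :=
  Set.eq_empty_of_forall_notMem fun _ ⟨hs, hsum⟩ =>
    (Finset.sum_nonneg fun i _ => hs i).not_gt (hsum.trans_lt hr)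

lemma cornerSimplex_succ (n : ℕ) (r : ℝ) :
    cornerSimplex (n + 1) r = MeasurableEquiv.piFinSuccAbove (fun _ => ℝ) 0 ⁻¹'
      {p | 0 ≤ p.1 ∧ p.2 ∈ cornerSimplex n (r - p.1)} := by
  ext s
  simp only [cornerSimplex, Set.mem_preimage, MeasurableEquiv.piFinSuccAbove_apply,
    Set.mem_ofPred_eq, Fin.forall_fin_succ, Fin.sum_univ_succ, le_sub_iff_add_le']
  tauto

lemma volume_slice_cornerSimplex_succ {n : ℕ} {r : ℝ}
    (hvol : ∀ {r : ℝ}, 0 ≤ r → volume (cornerSimplex n r) = ENNReal.ofReal (r ^ n / n.factorial))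
    (t : ℝ) :
    volume (Prod.mk t ⁻¹' {p : ℝ × (Fin n → ℝ) | 0 ≤ p.1 ∧ p.2 ∈ cornerSimplex n (r - p.1)}) =
      (Set.Icc 0 r).indicator (fun t => ENNReal.ofReal ((r - t) ^ n / n.factorial)) t := by
  by_cases ht : 0 ≤ t
  · simp only [Set.preimage, Set.mem_ofPred_eq, ht, true_and, Set.ofPred_mem_eq]
    by_cases htr : t ≤ r
    · rw [hvol (sub_nonneg.mpr htr), Set.indicator_of_mem (Set.mem_Icc.mpr ⟨ht, htr⟩)]
    · rw [cornerSimplex_eq_empty (by linarith), Set.indicator_of_notMem fun h => htr h.2,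
        measure_empty]
  · simp only [Set.preimage, Set.mem_ofPred_eq, ht, false_and, Set.ofPred_false, measure_empty]
    exact (Set.indicator_of_notMem (fun h => ht h.1) _).symm

lemma volume_cornerSimplex (n : ℕ) {r : ℝ} (hr : 0 ≤ r) :
    volume (cornerSimplex n r) = ENNReal.ofReal (r ^ n / n.factorial) := by
  induction n generalizing r with
  | zero => simp [cornerSimplex, hr, volume_pi]
  | succ n ih =>
    have hT : MeasurableSet {p : ℝ × (Fin n → ℝ) | 0 ≤ p.1 ∧ p.2 ∈ cornerSimplex n (r - p.1)} := by
      simp only [cornerSimplex, Set.mem_ofPred_eq]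
      measurability
    have hint :
        ∫ t in Set.Icc 0 r, (r - t) ^ n / n.factorial = r ^ (n + 1) / (n + 1).factorial := by
      rw [integral_Icc_eq_integral_Ioc, ← intervalIntegral.integral_of_le hr,
        intervalIntegral.integral_div, intervalIntegral.integral_comp_sub_left (· ^ n),
        integral_pow]
      push_cast [sub_self, sub_zero, zero_pow n.succ_ne_zero, Nat.factorial_succ]
      field_simp
    -- Fubini along the first coordinate, whose slice at height `t` is `cornerSimplex n (r - t)`.
    rw [cornerSimplex_succ, (volume_preserving_piFinSuccAbove (fun _ => ℝ) 0).measure_preimage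
      hT.nullMeasurableSet, Measure.volume_eq_prod, Measure.prod_apply hT,
      lintegral_congr (volume_slice_cornerSimplex_succ ih), lintegral_indicator measurableSet_Icc,
      ← ofReal_integral_eq_lintegral_ofReal (Continuous.integrableOn_Icc (by fun_prop))
        (ae_restrict_of_forall_mem measurableSet_Icc fun t ht =>
          div_nonneg (pow_nonneg (sub_nonneg.mpr ht.2) n) (Nat.cast_nonneg _)), hint]

lemma integrable_norm_pow_of_le {E : Type*} [NormedAddCommGroup E] [MeasurableSpace E]
    [OpensMeasurableSpace E] {ν : Measure E} [IsFiniteMeasure ν] {k m : ℕ}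
    (hk : Integrable (fun ξ => ‖ξ‖ ^ k) ν) (hm : m ≤ k) : Integrable (fun ξ => ‖ξ‖ ^ m) ν := by
  refine ((integrable_const 1).add hk).mono' (by fun_prop) (ae_of_all _ fun ξ => ?_)
  rw [Real.norm_of_nonneg (by positivity)]
  change ‖ξ‖ ^ m ≤ 1 + ‖ξ‖ ^ k
  rcases le_total ‖ξ‖ 1 with hξ | hξ
  · linarith [pow_le_one₀ (norm_nonneg ξ) hξ (n := m), pow_nonneg (norm_nonneg ξ) k]
  · linarith [pow_le_pow_right₀ hξ hm]

lemma lintegral_nnnorm_pow_ne_top_iff {E : Type*} [NormedAddCommGroup E] [MeasurableSpace E]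
    [OpensMeasurableSpace E] {ν : Measure E} {k : ℕ} :
    ∫⁻ ξ, (‖ξ‖₊ : ℝ≥0∞) ^ k ∂ν ≠ ∞ ↔ Integrable (fun ξ => ‖ξ‖ ^ k) ν := by
  simp only [Integrable, hasFiniteIntegral_iff_enorm, enorm_pow, enorm_norm, lt_top_iff_ne_top]
  exact ⟨fun hk => ⟨by fun_prop, hk⟩, And.right⟩

section FourierMoment

open Complex

noncomputable def fourierMoment (ν : Measure ℝ) (h : ℝ → ℂ) (m : ℕ) (x : ℝ) : ℂ :=
  ∫ ξ, (I * ξ) ^ m * exp (I * x * ξ) * h ξ ∂ν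

variable {ν : Measure ℝ} {h : ℝ → ℂ}

lemma norm_exp_I_mul_ofReal_mul_ofReal (x ξ : ℝ) : ‖exp (I * x * ξ)‖ = 1 := by
  rw [show I * x * ξ = ((x * ξ : ℝ) : ℂ) * I by push_cast; ring, norm_exp_ofReal_mul_I]

lemma norm_fourierMoment_integrand_le (hh : ∀ ξ, ‖h ξ‖ ≤ 1) (m : ℕ) (x ξ : ℝ) :
    ‖(I * ξ) ^ m * exp (I * x * ξ) * h ξ‖ ≤ ‖ξ‖ ^ m := by
  rw [norm_mul, norm_mul, norm_pow, norm_mul, norm_I, one_mul, norm_real,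
    norm_exp_I_mul_ofReal_mul_ofReal, mul_one]
  exact mul_le_of_le_one_right (by positivity) (hh ξ)

lemma hasDerivAt_fourierMoment (hmeas : Measurable h) (hh : ∀ ξ, ‖h ξ‖ ≤ 1) {m : ℕ}
    (hm : Integrable (fun ξ : ℝ => ‖ξ‖ ^ m) ν) (hm' : Integrable (fun ξ : ℝ => ‖ξ‖ ^ (m + 1)) ν)
    (x : ℝ) : HasDerivAt (fourierMoment ν h m) (fourierMoment ν h (m + 1) x) x := by
  refine (hasDerivAt_integral_of_dominated_loc_of_deriv_le (bound := fun ξ => ‖ξ‖ ^ (m + 1))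
    (Metric.ball_mem_nhds x one_pos) (Eventually.of_forall fun y => by fun_prop) ?_ (by fun_prop)
    (ae_of_all _ fun ξ y _ => norm_fourierMoment_integrand_le hh (m + 1) y ξ) hm'
    (ae_of_all _ fun ξ y _ => ?_)).2
  · exact hm.mono' (by fun_prop) (ae_of_all _ fun ξ => norm_fourierMoment_integrand_le hh m x ξ)
  · have hlin : HasDerivAt (fun y : ℝ => I * y * ξ) (I * ξ) y := by
      simpa using ((hasDerivAt_id y).ofReal_comp.const_mul I).mul_const (ξ : ℂ)
    exact ((hlin.cexp.const_mul ((I * ξ) ^ m)).mul_const (h ξ)).congr_deriv (by ring)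

lemma continuous_fourierMoment (hmeas : Measurable h) (hh : ∀ ξ, ‖h ξ‖ ≤ 1) {m : ℕ}
    (hm : Integrable (fun ξ : ℝ => ‖ξ‖ ^ m) ν) : Continuous (fourierMoment ν h m) :=
  continuous_of_dominated (fun x => by fun_prop)
    (fun x => ae_of_all _ fun ξ => norm_fourierMoment_integrand_le hh m x ξ) hm
    (ae_of_all _ fun ξ => by fun_prop)

end FourierMoment

section DerivativeSequence

variable {𝕜 F : Type*} [NontriviallyNormedField 𝕜] [NormedAddCommGroup F] [NormedSpace 𝕜 F]
  {g : ℕ → 𝕜 → F} {k : ℕ}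

lemma iteratedDeriv_eq_of_hasDerivAt_succ
    (hg : ∀ m < k, ∀ x, HasDerivAt (g m) (g (m + 1) x) x) {m : ℕ} (hm : m ≤ k) :
    iteratedDeriv m (g 0) = g m := by
  induction m with
  | zero => exact iteratedDeriv_zero
  | succ m ih =>
    rw [iteratedDeriv_succ, ih (by omega)]
    exact funext fun x => (hg m (by omega) x).deriv

lemma contDiff_of_hasDerivAt_succ (hg : ∀ m < k, ∀ x, HasDerivAt (g m) (g (m + 1) x) x)
    (hc : Continuous (g k)) : ContDiff 𝕜 (k : ℕ∞) (g 0) := by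
  have hdiff : ∀ m < k, Differentiable 𝕜 (g m) := fun m hm x => (hg m hm x).differentiableAt
  rw [contDiff_iff_iteratedDeriv]
  refine ⟨fun m hm => ?_, fun m hm => ?_⟩
  · have hm : m ≤ k := by exact_mod_cast hm
    rw [iteratedDeriv_eq_of_hasDerivAt_succ hg hm]
    rcases hm.lt_or_eq with hm | rfl
    exacts [(hdiff m hm).continuous, hc]
  · have hm : m < k := by exact_mod_cast hm
    rw [iteratedDeriv_eq_of_hasDerivAt_succ hg hm.le]
    exact hdiff m hm

end DerivativeSequence

lemma iptNorm_le_of_decomposition {m : ℕ} {Ω : Fin m → Type*} [∀ i, MeasurableSpace (Ω i)]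
    {φ : (∀ i, Ω i) → ℂ} {S : Type} [MeasurableSpace S] (ρ : Measure S) [SigmaFinite ρ]
    (φs : ∀ i, Ω i × S → ℂ) (hmeas : ∀ i, Measurable (φs i))
    (hbdd : ∀ i σ, ∃ C : ℝ, ∀ ω, ‖φs i (ω, σ)‖ ≤ C)
    (hfin : ∫⁻ σ, ∏ i, ⨆ ω, (‖φs i (ω, σ)‖₊ : ℝ≥0∞) ∂ρ ≠ ∞)
    (hφ : ∀ ω : ∀ i, Ω i, φ ω = ∫ σ, ∏ i, φs i (ω i, σ) ∂ρ) :
    iptNorm φ ≤ ∫⁻ σ, ∏ i, ⨆ ω, (‖φs i (ω, σ)‖₊ : ℝ≥0∞) ∂ρ :=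
  sInf_le ⟨S, _, ρ, φs, ‹_›, hmeas, hbdd, hfin, hφ, rfl⟩

lemma iptNorm_comp_le {m : ℕ} {Ω Ω' : Fin m → Type*} [∀ i, MeasurableSpace (Ω i)]
    [∀ i, MeasurableSpace (Ω' i)] {g : ∀ i, Ω' i → Ω i} (hg : ∀ i, Measurable (g i))
    (φ : (∀ i, Ω i) → ℂ) : iptNorm (fun ω : ∀ i, Ω' i => φ fun i => g i (ω i)) ≤ iptNorm φ := by
  refine le_sInf ?_
  rintro _ ⟨S, _, ρ, φs, _, hmeas, hbdd, hfin, hφ, rfl⟩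
  have hsup : ∫⁻ σ, ∏ i, ⨆ ω, (‖φs i (g i ω, σ)‖₊ : ℝ≥0∞) ∂ρ ≤
      ∫⁻ σ, ∏ i, ⨆ ω, (‖φs i (ω, σ)‖₊ : ℝ≥0∞) ∂ρ :=
    lintegral_mono fun σ => Finset.prod_le_prod' fun i _ =>
      iSup_le fun ω => le_iSup (fun ω => (‖φs i (ω, σ)‖₊ : ℝ≥0∞)) (g i ω)
  refine (iptNorm_le_of_decomposition ρ (fun i p => φs i (g i p.1, p.2))
    (fun i => (hmeas i).comp ((hg i).prodMap measurable_id)) (fun i σ => ?_)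
    (ne_top_of_le_ne_top hfin hsup) fun ω => hφ _).trans hsup
  obtain ⟨C, hC⟩ := hbdd i σ
  exact ⟨C, fun ω => hC (g i ω)⟩

lemma iptNormIcc_le_iptNorm (r : ℝ) {m : ℕ} (φ : (Fin m → ℝ) → ℂ) :
    iptNormIcc r φ ≤ iptNorm (Ω := fun _ : Fin m => ℝ) φ :=
  iptNorm_comp_le (fun _ => measurable_subtype_coe) φ

def simplexPoint {m : ℕ} (lam : Fin (m + 1) → ℝ) (s : Fin m → ℝ) : ℝ :=
  ∑ i, s i * lam i.castSucc + (1 - ∑ i, s i) * lam (Fin.last m)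

@[fun_prop]
lemma measurable_simplexPoint {m : ℕ} (lam : Fin (m + 1) → ℝ) : Measurable (simplexPoint lam) := by
  unfold simplexPoint
  fun_prop

lemma divDiffC_eq_setIntegral (f : ℝ → ℂ) (m : ℕ) (lam : Fin (m + 1) → ℝ) :
    divDiffC f m lam = ∫ s in cornerSimplex m 1, iteratedDeriv m f (simplexPoint lam s) :=
  rfl

section FourierSimplexFactor

open Complex

noncomputable def fourierSimplexFactor (h : ℝ → ℂ) (m : ℕ) (i : Fin (m + 1))
    (p : ℝ × (Fin m → ℝ) × ℝ) : ℂ :=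
  Fin.lastCases (motive := fun _ => ℂ)
    ((I * p.2.2) ^ m * h p.2.2 * exp (I * ↑((1 - ∑ l, p.2.1 l) * p.1 * p.2.2)))
    (fun l => exp (I * ↑(p.2.1 l * p.1 * p.2.2))) i

variable {h : ℝ → ℂ} {m : ℕ}

lemma prod_fourierSimplexFactor (lam : Fin (m + 1) → ℝ) (s : Fin m → ℝ) (ξ : ℝ) :
    ∏ i, fourierSimplexFactor h m i (lam i, s, ξ) =
      (I * ξ) ^ m * exp (I * simplexPoint lam s * ξ) * h ξ := by
  have hX : simplexPoint lam s * ξ =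
      ∑ l, s l * lam l.castSucc * ξ + (1 - ∑ l, s l) * lam (Fin.last m) * ξ := by
    rw [simplexPoint, add_mul, Finset.sum_mul]
  rw [mul_assoc I, ← ofReal_mul, hX, ofReal_add, mul_add, exp_add, ofReal_sum, Finset.mul_sum,
    exp_sum]
  simp only [fourierSimplexFactor, Fin.prod_univ_castSucc, Fin.lastCases_castSucc,
    Fin.lastCases_last]
  ring

lemma norm_fourierSimplexFactor_le (hh : ∀ ξ, ‖h ξ‖ ≤ 1) (i : Fin (m + 1))
    (p : ℝ × (Fin m → ℝ) × ℝ) :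
    ‖fourierSimplexFactor h m i p‖ ≤
      Fin.lastCases (motive := fun _ => ℝ) (‖p.2.2‖ ^ m) (fun _ => 1) i := by
  induction i using Fin.lastCases with
  | last =>
    rw [fourierSimplexFactor, Fin.lastCases_last, Fin.lastCases_last, norm_mul, norm_mul,
      norm_pow, norm_mul, norm_I, one_mul, norm_real, norm_exp_I_mul_ofReal, mul_one]
    exact mul_le_of_le_one_right (by positivity) (hh _)
  | cast l =>
    rw [fourierSimplexFactor, Fin.lastCases_castSucc, Fin.lastCases_castSucc,
      norm_exp_I_mul_ofReal]

lemma measurable_fourierSimplexFactor (hmeas : Measurable h) (i : Fin (m + 1)) :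
    Measurable (fourierSimplexFactor h m i) := by
  induction i using Fin.lastCases with
  | last => unfold fourierSimplexFactor; simp only [Fin.lastCases_last]; fun_prop
  | cast l => unfold fourierSimplexFactor; simp only [Fin.lastCases_castSucc]; fun_prop

lemma prod_iSup_enorm_fourierSimplexFactor_le (hh : ∀ ξ, ‖h ξ‖ ≤ 1) (σ : (Fin m → ℝ) × ℝ) :
    ∏ i, ⨆ ω, (‖fourierSimplexFactor h m i (ω, σ)‖₊ : ℝ≥0∞) ≤ (‖σ.2‖₊ : ℝ≥0∞) ^ m := by
  have hsup : ∀ i, ⨆ ω, (‖fourierSimplexFactor h m i (ω, σ)‖₊ : ℝ≥0∞) ≤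
      ENNReal.ofReal (Fin.lastCases (motive := fun _ => ℝ) (‖σ.2‖ ^ m) (fun _ => 1) i) :=
    fun i => iSup_le fun ω =>
      (ofReal_norm _).symm.trans_le (ENNReal.ofReal_le_ofReal (norm_fourierSimplexFactor_le hh i _))
  refine (Finset.prod_le_prod' fun i _ => hsup i).trans_eq ?_
  simp only [Fin.prod_univ_castSucc, Fin.lastCases_castSucc, Fin.lastCases_last,
    ENNReal.ofReal_one, Finset.prod_const_one, one_mul, ENNReal.ofReal_pow (norm_nonneg _),
    ofReal_norm]
  rfl

end FourierSimplexFactor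

open Complex in
lemma iptNorm_divDiffC_le {ν : Measure ℝ} [SigmaFinite ν] {h : ℝ → ℂ} (hmeas : Measurable h)
    (hh : ∀ ξ, ‖h ξ‖ ≤ 1) {m : ℕ} (hm : Integrable (fun ξ : ℝ => ‖ξ‖ ^ m) ν) {f : ℝ → ℂ}
    (hf : iteratedDeriv m f = fourierMoment ν h m) :
    iptNorm (Ω := fun _ : Fin (m + 1) => ℝ) (divDiffC f m) ≤
      (∫⁻ ξ, (‖ξ‖₊ : ℝ≥0∞) ^ m ∂ν) / (m.factorial : ℝ≥0∞) := by
  set μS := volume.restrict (cornerSimplex m 1)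
  have hμS : μS Set.univ = (m.factorial : ℝ≥0∞)⁻¹ := by
    rw [Measure.restrict_apply_univ, volume_cornerSimplex m zero_le_one, one_pow, one_div,
      ENNReal.ofReal_inv_of_pos (by positivity), ENNReal.ofReal_natCast]
  have : IsFiniteMeasure μS := ⟨by simp [hμS, Nat.factorial_pos]⟩
  set ρ := μS.prod ν
  have hbound : ∫⁻ σ, (‖σ.2‖₊ : ℝ≥0∞) ^ m ∂ρ = (∫⁻ ξ, (‖ξ‖₊ : ℝ≥0∞) ^ m ∂ν) / m.factorial := by
    rw [lintegral_prod _ (by fun_prop)]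
    dsimp only
    rw [lintegral_const, hμS, div_eq_mul_inv]
  have hdecomp (lam : Fin (m + 1) → ℝ) :
      divDiffC f m lam = ∫ σ, ∏ i, fourierSimplexFactor h m i (lam i, σ) ∂ρ := by
    have hint : Integrable (fun σ : (Fin m → ℝ) × ℝ =>
        (I * σ.2) ^ m * exp (I * simplexPoint lam σ.1 * σ.2) * h σ.2) ρ :=
      (hm.comp_snd μS).mono' (by fun_prop)
        (ae_of_all _ fun σ => norm_fourierMoment_integrand_le hh m _ _)
    simp only [prod_fourierSimplexFactor, divDiffC_eq_setIntegral, hf, fourierMoment]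
    exact (integral_prod _ hint).symm
  have hcost : ∫⁻ σ, ∏ i, ⨆ ω, (‖fourierSimplexFactor h m i (ω, σ)‖₊ : ℝ≥0∞) ∂ρ ≤
      (∫⁻ ξ, (‖ξ‖₊ : ℝ≥0∞) ^ m ∂ν) / m.factorial :=
    (lintegral_mono (prod_iSup_enorm_fourierSimplexFactor_le hh)).trans_eq hbound
  refine (iptNorm_le_of_decomposition ρ _ (fun i => measurable_fourierSimplexFactor hmeas i)
    (fun i σ => ⟨Fin.lastCases (motive := fun _ => ℝ) (‖σ.2‖ ^ m) (fun _ => 1) i,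
      fun ω => norm_fourierSimplexFactor_le hh i (ω, σ)⟩)
    (ne_top_of_le_ne_top ?_ hcost) hdecomp).trans hcost
  exact ENNReal.div_ne_top (lintegral_nnnorm_pow_ne_top_iff.mpr hm)
    (Nat.cast_ne_zero.mpr m.factorial_ne_zero)

theorem stmt_15_general (k j : ℕ) (hj : j ≤ k)
    (ν : Measure ℝ) (hν : IsFiniteMeasure ν) (h : ℝ → ℂ) (hmeas : Measurable h)
    (hunit : ∀ ξ, ‖h ξ‖ = 1)
    (hmom : (∫⁻ ξ, (‖ξ‖₊ : ℝ≥0∞) ^ k ∂ν) ≠ ∞)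
    (f : ℝ → ℂ)
    (hf : ∀ lam : ℝ, f lam = ∫ ξ, Complex.exp (Complex.I * lam * ξ) * h ξ ∂ν) :
    ContDiff ℝ (k : ℕ∞) f ∧
      iptNorm (Ω := fun _ : Fin (j + 1) => ℝ) (divDiffC f j) ≤
        (∫⁻ ξ, (‖ξ‖₊ : ℝ≥0∞) ^ j ∂ν) / (j.factorial : ℝ≥0∞) ∧
      ∀ r : ℝ, 0 < r → cNorm k r f ≠ ∞ := by
  have hh : ∀ ξ, ‖h ξ‖ ≤ 1 := fun ξ => (hunit ξ).le
  have hmoment : ∀ m ≤ k, Integrable (fun ξ : ℝ => ‖ξ‖ ^ m) ν := fun m hm =>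
    integrable_norm_pow_of_le (lintegral_nnnorm_pow_ne_top_iff.mp hmom) hm
  have hderiv : ∀ m < k, ∀ x, HasDerivAt (fourierMoment ν h m) (fourierMoment ν h (m + 1) x) x :=
    fun m hm => hasDerivAt_fourierMoment hmeas hh (hmoment m hm.le) (hmoment (m + 1) hm)
  have hf0 : f = fourierMoment ν h 0 := funext fun x => by simp [hf, fourierMoment]
  have hdivDiff (m : ℕ) (hm : m ≤ k) :
      iptNorm (Ω := fun _ : Fin (m + 1) => ℝ) (divDiffC f m) ≤
        (∫⁻ ξ, (‖ξ‖₊ : ℝ≥0∞) ^ m ∂ν) / (m.factorial : ℝ≥0∞) :=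
    iptNorm_divDiffC_le hmeas hh (hmoment m hm)
      (hf0 ▸ iteratedDeriv_eq_of_hasDerivAt_succ hderiv hm)
  have hcont : Continuous (fourierMoment ν h k) :=
    continuous_fourierMoment hmeas hh (hmoment k le_rfl)
  refine ⟨hf0 ▸ contDiff_of_hasDerivAt_succ hderiv hcont, hdivDiff j hj,
    fun r _ => (ENNReal.sum_lt_top.mpr fun m hm => ?_).ne⟩
  have hm : m ≤ k := Nat.lt_succ_iff.mp (Finset.mem_range.mp hm)
  calc iptNormIcc r (divDiffC f m) ≤ iptNorm (Ω := fun _ : Fin (m + 1) => ℝ) (divDiffC f m) :=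
        iptNormIcc_le_iptNorm r _
    _ ≤ _ := hdivDiff m hm
    _ < ∞ := ENNReal.div_lt_top (lintegral_nnnorm_pow_ne_top_iff.mpr (hmoment m hm))
        (Nat.cast_ne_zero.mpr m.factorial_ne_zero)

/-- Lemma 3.7: if `μ` is a Borel complex measure (encoded in polar form
`μ(dξ) = h(ξ) ν(dξ)`, `ν = |μ|`, `|h| ≡ 1`) with `μ_{(k)} = ∫ |ξ|^k d|μ| < ∞` and
`f(λ) = ∫_ℝ e^{iλξ} μ(dξ)`, then `f ∈ C^k(ℝ)` and, for `0 ≤ j ≤ k`, the (continuous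
extension of the) divided difference `f^{[j]} : ℝ^{j+1} → ℂ` has `ℓ^∞`-integral projective
tensor norm (over `Ω_1 = ⋯ = Ω_{j+1} = ℝ`) at most `μ_{(j)}/j!`.  In particular
`W_k(ℝ) ⊆ 𝒞^{[k]}(ℝ)`. -/
theorem stmt_15 (k j : ℕ) (hk : 1 ≤ k) (hj : j ≤ k)
    (ν : Measure ℝ) (hν : IsFiniteMeasure ν) (h : ℝ → ℂ) (hmeas : Measurable h)
    (hunit : ∀ ξ, ‖h ξ‖ = 1)
    (hmom : (∫⁻ ξ, (‖ξ‖₊ : ℝ≥0∞) ^ k ∂ν) ≠ ∞)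
    (f : ℝ → ℂ)
    (hf : ∀ lam : ℝ, f lam = ∫ ξ, Complex.exp (Complex.I * lam * ξ) * h ξ ∂ν) :
    ContDiff ℝ (k : ℕ∞) f ∧
      iptNorm (Ω := fun _ : Fin (j + 1) => ℝ) (divDiffC f j) ≤
        (∫⁻ ξ, (‖ξ‖₊ : ℝ≥0∞) ^ j ∂ν) / (j.factorial : ℝ≥0∞) ∧
      ∀ r : ℝ, 0 < r → cNorm k r f ≠ ∞ :=
  stmt_15_general k j hj ν hν h hmeas hunit hmom f hf
end

section
/- Fix k ∈ ℕ. Then W_k(ℝ)_loc = { f ∈ C^k(ℝ) : η·f ∈ W_k(ℝ) for every η ∈ C_c^∞(ℝ) }. -/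
/-!
If `g ∈ W_k` is the transform of `μ` and `η` is a Schwartz function, then by Fourier inversion
`η(λ) = ∫ e^{iλs} G(s) ds` with `G` Schwartz, and `η g` is the transform of the convolution
`G(s) ds ∗ μ`, which has the density `x ↦ ∫ G(x - ξ) dμ(ξ)`. Its `k`-th moment is finite because
`1 + |s + ξ|^k ≤ 2^k (1 + |s|^k) (1 + |ξ|^k)`. So `W_k` is stable under multiplication by
`C_c^∞` functions, which gives one inclusion since `η f = η g` when `g = f` near `supp η`; for the
other, multiply by a bump function equal to `1` on `[-r, r]`.
-/

open MeasureTheory Filter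
open scoped ENNReal NNReal

/-- Membership in the Wiener space `W_k(ℝ)` : `f(λ) = ∫_ℝ e^{iλξ} μ(dξ)` for a Borel complex
measure `μ` with `∫ |ξ|^k d|μ| < ∞`.  The complex measure `μ` is encoded in polar form
`μ(dξ) = h(ξ) ν(dξ)` with `ν = |μ|` a finite (positive) Borel measure and `|h| ≡ 1`. -/
def memWiener (k : ℕ) (f : ℝ → ℂ) : Prop :=
  ∃ (ν : MeasureTheory.Measure ℝ) (h : ℝ → ℂ),
    MeasureTheory.IsFiniteMeasure ν ∧ Measurable h ∧ (∀ ξ, ‖h ξ‖ = 1) ∧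
    (∫⁻ ξ, (‖ξ‖₊ : ℝ≥0∞) ^ k ∂ν) ≠ ∞ ∧
    ∀ lam : ℝ, f lam = ∫ ξ, Complex.exp (Complex.I * lam * ξ) * h ξ ∂ν

open Complex SchwartzMap
open scoped FourierTransform

lemma one_add_enorm_add_pow_le {E : Type*} [SeminormedAddCommGroup E] (x y : E) (k : ℕ) :
    1 + ‖x + y‖ₑ ^ k ≤ (2 : ℝ≥0∞) ^ k * ((1 + ‖x‖ₑ ^ k) * (1 + ‖y‖ₑ ^ k)) := by
  have hpow : ‖x + y‖₊ ^ k ≤ 2 ^ k * (‖x‖₊ ^ k + ‖y‖₊ ^ k) :=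
    calc ‖x + y‖₊ ^ k ≤ (‖x‖₊ + ‖y‖₊) ^ k := pow_le_pow_left₀ zero_le (nnnorm_add_le x y) k
      _ ≤ 2 ^ (k - 1) * (‖x‖₊ ^ k + ‖y‖₊ ^ k) := add_pow_le zero_le zero_le k
      _ ≤ 2 ^ k * (‖x‖₊ ^ k + ‖y‖₊ ^ k) := by gcongr <;> [exact one_le_two; omega]
  have hnn : (1 : ℝ≥0) + ‖x + y‖₊ ^ k ≤ 2 ^ k * ((1 + ‖x‖₊ ^ k) * (1 + ‖y‖₊ ^ k)) :=
    calc (1 : ℝ≥0) + ‖x + y‖₊ ^ k ≤ 2 ^ k * (1 + (‖x‖₊ ^ k + ‖y‖₊ ^ k)) := by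
          rw [mul_add, mul_one]; gcongr; exact one_le_pow₀ one_le_two
      _ ≤ 2 ^ k * ((1 + ‖x‖₊ ^ k) * (1 + ‖y‖₊ ^ k)) := by
          gcongr
          calc 1 + (‖x‖₊ ^ k + ‖y‖₊ ^ k) ≤ 1 + (‖x‖₊ ^ k + ‖y‖₊ ^ k) + ‖x‖₊ ^ k * ‖y‖₊ ^ k :=
                le_self_add
            _ = (1 + ‖x‖₊ ^ k) * (1 + ‖y‖₊ ^ k) := by ring
  have h := ENNReal.coe_le_coe.2 hnn
  push_cast at h
  exact h

section Schwartz

variable {D V : Type*} [NormedAddCommGroup D] [NormedSpace ℝ D] [MeasurableSpace D]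
  [BorelSpace D] [SecondCountableTopology D] {μ : Measure D} [μ.HasTemperateGrowth]
  [NormedAddCommGroup V] [NormedSpace ℝ V]

lemma SchwartzMap.lintegral_enorm_mul_one_add_pow_ne_top (f : 𝓢(D, V)) (k : ℕ) :
    ∫⁻ x, ‖f x‖ₑ * (1 + ‖x‖ₑ ^ k) ∂μ ≠ ∞ := by
  have hmom : ∫⁻ x, ‖x‖ₑ ^ k * ‖f x‖ₑ ∂μ ≠ ∞ := by
    simpa [enorm_mul, enorm_pow] using (f.integrable_pow_mul μ k).2.ne
  simp only [mul_add, mul_one]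
  rw [lintegral_add_left' f.continuous.enorm.aemeasurable]
  simpa [mul_comm] using ⟨f.integrable.2.ne, hmom⟩

end Schwartz

lemma SchwartzMap.exists_eq_integral_exp_mul (Φ : 𝓢(ℝ, ℂ)) :
    ∃ G : 𝓢(ℝ, ℂ), ∀ x : ℝ, Φ x = ∫ s : ℝ, exp (I * x * s) * G s := by
  let scale : ℝ ≃L[ℝ] ℝ :=
    ContinuousLinearEquiv.unitsEquivAut ℝ (Units.mk0 (2 * Real.pi) (by positivity))
  -- Fourier inversion for `Φ₁ = Φ (2π ·)` turns the kernel `e^{2πi t y}` into `e^{i x t}`.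
  set Φ₁ := compCLMOfContinuousLinearEquiv ℂ scale Φ
  refine ⟨𝓕 Φ₁, fun x => ?_⟩
  have hx : Φ x = 𝓕⁻ (𝓕 Φ₁) (x / (2 * Real.pi)) := by
    simp [Φ₁, scale, div_mul_cancel₀ x (by positivity : 2 * Real.pi ≠ 0)]
  rw [hx, fourierInv_coe, Real.fourierInv_eq']
  congr 1 with s
  rw [smul_eq_mul]
  congr 2
  simp only [RCLike.inner_apply, conj_trivial]
  push_cast
  field_simp

lemma memWiener_of_density {k : ℕ} {f : ℝ → ℂ} (ρ : Measure ℝ) (w : ℝ → ℂ) (hw : Measurable w)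
    (hfin : ∫⁻ ξ, ‖w ξ‖ₑ * (1 + ‖ξ‖ₑ ^ k) ∂ρ ≠ ∞)
    (hf : ∀ lam : ℝ, f lam = ∫ ξ, exp (I * lam * ξ) * w ξ ∂ρ) :
    memWiener k f := by
  refine ⟨ρ.withDensity fun ξ => ‖w ξ‖₊, fun ξ => exp (arg (w ξ) * I), ⟨?_⟩, by fun_prop,
    fun ξ => norm_exp_ofReal_mul_I _, ?_, fun lam => ?_⟩
  · rw [withDensity_apply _ MeasurableSet.univ, Measure.restrict_univ]
    refine lt_of_le_of_lt (lintegral_mono fun ξ => ?_) hfin.lt_top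
    exact le_mul_of_one_le_right' le_self_add
  · rw [lintegral_withDensity_eq_lintegral_mul _ hw.nnnorm.coe_nnreal_ennreal (by fun_prop)]
    refine ne_top_of_le_ne_top hfin (lintegral_mono fun ξ => ?_)
    simp only [Pi.mul_apply]
    exact mul_le_mul_of_nonneg_left le_add_self zero_le
  · rw [hf lam, integral_withDensity_eq_integral_smul hw.nnnorm]
    congr 1 with ξ
    conv_lhs => rw [← norm_mul_exp_arg_mul_I (w ξ)]
    rw [NNReal.smul_def, coe_nnnorm, real_smul]
    ring

lemma lintegral_enorm_comp_sub_mul_one_add_pow_ne_top {k : ℕ}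
    {ν : Measure ℝ} [IsFiniteMeasure ν] (hν : ∫⁻ ξ, ‖ξ‖ₑ ^ k ∂ν ≠ ∞) {G : ℝ → ℂ}
    (hG : Measurable G) (hGfin : ∫⁻ s, ‖G s‖ₑ * (1 + ‖s‖ₑ ^ k) ≠ ∞) :
    ∫⁻ p : ℝ × ℝ, ‖G (p.1 - p.2)‖ₑ * (1 + ‖p.1‖ₑ ^ k) ∂(volume.prod ν) ≠ ∞ := by
  set C := ∫⁻ s, ‖G s‖ₑ * (1 + ‖s‖ₑ ^ k)
  have hinner : ∀ ξ : ℝ, ∫⁻ x, ‖G (x - ξ)‖ₑ * (1 + ‖x‖ₑ ^ k) ≤ 2 ^ k * C * (1 + ‖ξ‖ₑ ^ k) := by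
    intro ξ
    calc ∫⁻ x, ‖G (x - ξ)‖ₑ * (1 + ‖x‖ₑ ^ k)
        = ∫⁻ x, ‖G (x - ξ)‖ₑ * (1 + ‖x - ξ + ξ‖ₑ ^ k) := by simp only [sub_add_cancel]
      _ = ∫⁻ s, ‖G s‖ₑ * (1 + ‖s + ξ‖ₑ ^ k) :=
          lintegral_sub_right_eq_self (fun s => ‖G s‖ₑ * (1 + ‖s + ξ‖ₑ ^ k)) ξ
      _ ≤ ∫⁻ s, 2 ^ k * (1 + ‖ξ‖ₑ ^ k) * (‖G s‖ₑ * (1 + ‖s‖ₑ ^ k)) := by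
          refine lintegral_mono fun s => ?_
          calc ‖G s‖ₑ * (1 + ‖s + ξ‖ₑ ^ k)
              ≤ ‖G s‖ₑ * (2 ^ k * ((1 + ‖s‖ₑ ^ k) * (1 + ‖ξ‖ₑ ^ k))) := by
                gcongr; exact one_add_enorm_add_pow_le s ξ k
            _ = _ := by ring
      _ = 2 ^ k * C * (1 + ‖ξ‖ₑ ^ k) := by
          rw [lintegral_const_mul _ (by fun_prop)]; ring
  rw [lintegral_prod_symm _ (by fun_prop)]
  refine ne_top_of_le_ne_top ?_ (lintegral_mono hinner)
  rw [lintegral_const_mul _ (by fun_prop), lintegral_add_left measurable_const,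
    lintegral_const]
  exact ENNReal.mul_ne_top (ENNReal.mul_ne_top (by simp) hGfin)
    (ENNReal.add_ne_top.2 ⟨by simp, hν⟩)

lemma integral_exp_mul_comp_sub (G : ℝ → ℂ) (lam ξ : ℝ) :
    ∫ x : ℝ, exp (I * lam * x) * G (x - ξ) = exp (I * lam * ξ) * ∫ s : ℝ, exp (I * lam * s) * G s :=
  calc ∫ x : ℝ, exp (I * lam * x) * G (x - ξ)
      = ∫ x : ℝ, exp (I * lam * (x - ξ + ξ : ℝ)) * G (x - ξ) := by simp only [sub_add_cancel]
    _ = ∫ s : ℝ, exp (I * lam * (s + ξ : ℝ)) * G s :=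
        integral_sub_right_eq_self (fun s : ℝ => exp (I * lam * (s + ξ : ℝ)) * G s) ξ
    _ = exp (I * lam * ξ) * ∫ s : ℝ, exp (I * lam * s) * G s := by
        rw [← integral_const_mul]
        congr 1 with s
        rw [ofReal_add, mul_add, exp_add]
        ring

lemma memWiener_mul_of_eq_integral_exp_mul {k : ℕ} {η g : ℝ → ℂ} (G : ℝ → ℂ) (hG : Measurable G)
    (hGfin : ∫⁻ s, ‖G s‖ₑ * (1 + ‖s‖ₑ ^ k) ≠ ∞) (hη : ∀ x : ℝ, η x = ∫ s : ℝ, exp (I * x * s) * G s)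
    (hg : memWiener k g) : memWiener k (fun x => η x * g x) := by
  obtain ⟨ν, h, hν, hh, hh1, hmom, hg⟩ := hg
  have hprod := lintegral_enorm_comp_sub_mul_one_add_pow_ne_top hmom hG hGfin
  have hmeas : Measurable fun p : ℝ × ℝ => G (p.1 - p.2) * h p.2 := by fun_prop
  refine memWiener_of_density volume (fun x => ∫ ξ, G (x - ξ) * h ξ ∂ν)
    hmeas.stronglyMeasurable.integral_prod_right'.measurable ?_ fun lam => ?_
  · refine ne_top_of_le_ne_top hprod ?_
    calc ∫⁻ x, ‖∫ ξ, G (x - ξ) * h ξ ∂ν‖ₑ * (1 + ‖x‖ₑ ^ k)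
        ≤ ∫⁻ x, (∫⁻ ξ, ‖G (x - ξ)‖ₑ ∂ν) * (1 + ‖x‖ₑ ^ k) := by
          refine lintegral_mono fun x => mul_le_mul_of_nonneg_right ?_ zero_le
          simpa [enorm_mul, ← ofReal_norm, hh1] using
            enorm_integral_le_lintegral_enorm (μ := ν) fun ξ => G (x - ξ) * h ξ
      _ = ∫⁻ p : ℝ × ℝ, ‖G (p.1 - p.2)‖ₑ * (1 + ‖p.1‖ₑ ^ k) ∂(volume.prod ν) := by
          rw [lintegral_prod _ (by fun_prop)]
          congr 1 with x
          rw [← lintegral_mul_const _ (by fun_prop)]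
  · have hint : Integrable (fun p : ℝ × ℝ => exp (I * lam * p.1) * (G (p.1 - p.2) * h p.2))
        (volume.prod ν) := by
      refine ⟨by fun_prop, ?_⟩
      refine lt_of_le_of_lt (lintegral_mono fun p => ?_) hprod.lt_top
      rw [enorm_mul, enorm_mul, ← ofReal_norm, ← ofReal_norm (h _), mul_assoc I, ← ofReal_mul,
        norm_exp_I_mul_ofReal, hh1]
      simpa using le_mul_of_one_le_right' le_self_add
    symm
    calc ∫ x : ℝ, exp (I * lam * x) * ∫ ξ, G (x - ξ) * h ξ ∂ν
        = ∫ x : ℝ, ∫ ξ, exp (I * lam * x) * (G (x - ξ) * h ξ) ∂ν := by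
          simp_rw [integral_const_mul]
      _ = ∫ ξ, ∫ x : ℝ, exp (I * lam * x) * (G (x - ξ) * h ξ) ∂volume ∂ν :=
          integral_integral_swap hint
      _ = ∫ ξ, η lam * (exp (I * lam * ξ) * h ξ) ∂ν := by
          congr 1 with ξ
          simp_rw [← mul_assoc, integral_mul_const, integral_exp_mul_comp_sub, hη]
          ring
      _ = η lam * g lam := by rw [integral_const_mul, hg]

lemma memWiener_schwartzMap_mul {k : ℕ} {g : ℝ → ℂ} (Φ : 𝓢(ℝ, ℂ)) (hg : memWiener k g) :
    memWiener k (fun x => Φ x * g x) := by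
  obtain ⟨G, hG⟩ := Φ.exists_eq_integral_exp_mul
  exact memWiener_mul_of_eq_integral_exp_mul G G.continuous.measurable
    (G.lintegral_enorm_mul_one_add_pow_ne_top k) hG hg

theorem stmt_17_general (k : ℕ) (f : ℝ → ℂ) :
    (ContDiff ℝ (k : ℕ∞) f ∧
        ∀ r : ℝ, 0 < r → ∃ g : ℝ → ℂ, memWiener k g ∧ Set.EqOn g f (Set.Icc (-r) r)) ↔
      (ContDiff ℝ (k : ℕ∞) f ∧
        ∀ η : ℝ → ℂ, ContDiff ℝ (⊤ : ℕ∞) η → HasCompactSupport η →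
          memWiener k (fun x => η x * f x)) := by
  refine and_congr_right fun _ => ⟨fun hloc η hη hηc => ?_, fun hmul r hr => ?_⟩
  · obtain ⟨r, hr, hsupp⟩ := hηc.isCompact.isBounded.subset_ball_lt 0 0
    obtain ⟨g, hg, hgf⟩ := hloc r hr
    have hsupp' : tsupport η ⊆ Set.Icc (-r) r := by
      simpa [Real.closedBall_eq_Icc] using hsupp.trans Metric.ball_subset_closedBall
    have hηf : (fun x => η x * f x) = fun x => η x * g x := by
      ext x
      by_cases hx : x ∈ Set.Icc (-r) r
      · rw [hgf hx]
      · simp [image_eq_zero_of_notMem_tsupport fun h => hx (hsupp' h)]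
    exact hηf ▸ memWiener_schwartzMap_mul (hηc.toSchwartzMap hη) hg
  · let c : ContDiffBump (0 : ℝ) := ⟨r, r + 1, hr, lt_add_one r⟩
    refine ⟨_, hmul (fun x => (c x : ℂ)) (ofRealCLM.contDiff.comp c.contDiff)
      (c.hasCompactSupport.comp_left ofReal_zero), fun x hx => ?_⟩
    have hc : c x = 1 := c.one_of_mem_closedBall (by simpa [Real.closedBall_eq_Icc] using hx)
    simp [hc]

/-- Lemma 4.2: `W_k(ℝ)_loc = {f ∈ C^k(ℝ) : η f ∈ W_k(ℝ) for all
η ∈ C_c^∞(ℝ)}`. -/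
theorem stmt_17 (k : ℕ) (hk : 1 ≤ k) (f : ℝ → ℂ) :
    (ContDiff ℝ (k : ℕ∞) f ∧
        ∀ r : ℝ, 0 < r → ∃ g : ℝ → ℂ, memWiener k g ∧ Set.EqOn g f (Set.Icc (-r) r)) ↔
      (ContDiff ℝ (k : ℕ∞) f ∧
        ∀ η : ℝ → ℂ, ContDiff ℝ (⊤ : ℕ∞) η → HasCompactSupport η →
          memWiener k (fun x => η x * f x)) :=
  stmt_17_general k f
end
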